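/- In Game 2 on a set A ⊆ ω^ω, Player I has a winning strategy if and only if there exists a Laver tree L with [L] ∩ A = ∅. -/

import Mathlib

/-- The restriction `x↾n` of `x : ℕ → ℕ` to its first `n` values, as a finite sequence. -/
def res (x : ℕ → ℕ) (n : ℕ) : List ℕ := List.ofFn fun i : Fin n => x i

/-- A subtree of `ω^{<ω}`: a set of finite sequences closed under initial segments. -/
def IsSubtree (T : Set (List ℕ)) : Prop := ∀ s ∈ T, ∀ t : List ℕ, t <+: s → t ∈ T

/-- `[T]`, the set of branches of a subtree `T`. -/
def branches (T : Set (List ℕ)) : Set (ℕ → ℕ) := {x | ∀ n, res x n ∈ T}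

/-- A Laver tree: a (nonempty) subtree in which every node splits infinitely often. -/
def IsLaver (T : Set (List ℕ)) : Prop :=
  IsSubtree T ∧ [] ∈ T ∧ ∀ s ∈ T, {n : ℕ | s ++ [n] ∈ T}.Infinite

/-- Game 2 on `A`: at round `k` Player I plays an infinite set `X k ⊆ ω` and Player II
responds with `m k ∈ X k`; Player II wins iff `m ∈ A`.  A strategy for Player I maps
Player II's previous moves `m 0, …, m (k-1)` to an infinite set `X k ⊆ ω`.  It is a
*winning* strategy iff every play in which Player I follows it and Player II plays legally
(`m k ∈ X k` for all `k`) lands outside `A`. -/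
def IWinsGame2 (A : Set (ℕ → ℕ)) : Prop :=
  ∃ τ : List ℕ → Set ℕ,
    (∀ p : List ℕ, (τ p).Infinite) ∧
    ∀ m : ℕ → ℕ, (∀ k, m k ∈ τ (List.ofFn fun i : Fin k => m i)) → m ∉ A

/-!
Both directions identify Player I's strategies with Laver trees. A strategy `τ` determines the
tree of positions reachable against it, where the successors of `s` are `τ s`; since every `τ s`
is infinite this tree is Laver, and its branches are exactly the plays that follow `τ`.
Conversely, Player I can play along a Laver tree `L` by offering the set of successors of the
current position, which keeps every play on a branch of `L`.
-/

lemma res_succ (x : ℕ → ℕ) (k : ℕ) : res x (k + 1) = res x k ++ [x k] := by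
  simp [res, List.ofFn_succ', List.concat_eq_append, -List.ofFn_succ]

lemma mem_branches_of_forall_res_append_mem {T : Set (List ℕ)} (hT : [] ∈ T) {x : ℕ → ℕ}
    (hx : ∀ k, res x k ∈ T → res x k ++ [x k] ∈ T) : x ∈ branches T := by
  intro n
  induction n with
  | zero => exact hT
  | succ k ih => exact res_succ x k ▸ hx k ih

section StrategyTree

variable (τ : List ℕ → Set ℕ)

def strategyTree : Set (List ℕ) := {s | ∀ t n, t ++ [n] <+: s → n ∈ τ t}

lemma nil_mem_strategyTree : [] ∈ strategyTree τ := by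
  intro t n h
  simp [List.prefix_nil] at h

lemma append_singleton_mem_strategyTree_iff {s : List ℕ} {n : ℕ} :
    s ++ [n] ∈ strategyTree τ ↔ s ∈ strategyTree τ ∧ n ∈ τ s := by
  simp only [strategyTree, Set.mem_ofPred_eq, List.prefix_concat_iff]
  constructor
  · intro h
    exact ⟨fun t m ht => h t m (Or.inr ht), h s n (Or.inl rfl)⟩
  · rintro ⟨h, hn⟩ t m (heq | ht)
    · obtain ⟨rfl, hm⟩ := List.append_inj' heq rfl
      exact (List.singleton_inj.1 hm) ▸ hn
    · exact h t m ht

lemma isSubtree_strategyTree : IsSubtree (strategyTree τ) :=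
  fun _ hs _ hts u n hu => hs u n (hu.trans hts)

lemma isLaver_strategyTree (hτ : ∀ p, (τ p).Infinite) : IsLaver (strategyTree τ) := by
  refine ⟨isSubtree_strategyTree τ, nil_mem_strategyTree τ, fun s hs => (hτ s).mono ?_⟩
  intro n hn
  exact (append_singleton_mem_strategyTree_iff τ).2 ⟨hs, hn⟩

lemma mem_branches_strategyTree_iff {x : ℕ → ℕ} :
    x ∈ branches (strategyTree τ) ↔ ∀ k, x k ∈ τ (res x k) := by
  constructor
  · intro hx k
    have := hx (k + 1)
    rw [res_succ, append_singleton_mem_strategyTree_iff] at this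
    exact this.2
  · intro hx
    refine mem_branches_of_forall_res_append_mem (nil_mem_strategyTree τ) fun k hk => ?_
    exact (append_singleton_mem_strategyTree_iff τ).2 ⟨hk, hx k⟩

end StrategyTree

open Classical in
noncomputable def laverStrategy (L : Set (List ℕ)) (p : List ℕ) : Set ℕ :=
  if p ∈ L then {n | p ++ [n] ∈ L} else Set.univ

lemma laverStrategy_infinite {L : Set (List ℕ)} (hL : IsLaver L) (p : List ℕ) :
    (laverStrategy L p).Infinite := by
  unfold laverStrategy
  split_ifs with hp
  · exact hL.2.2 p hp
  · exact Set.infinite_univ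

lemma mem_branches_of_follows_laverStrategy {L : Set (List ℕ)} (hL : [] ∈ L) {x : ℕ → ℕ}
    (hx : ∀ k, x k ∈ laverStrategy L (res x k)) : x ∈ branches L := by
  refine mem_branches_of_forall_res_append_mem hL fun k hk => ?_
  simpa [laverStrategy, hk] using hx k

theorem game2_playerI_iff_laver (A : Set (ℕ → ℕ)) :
    IWinsGame2 A ↔ ∃ L : Set (List ℕ), IsLaver L ∧ branches L ∩ A = ∅ := by
  constructor
  · rintro ⟨τ, hτ, hwin⟩
    refine ⟨strategyTree τ, isLaver_strategyTree τ hτ, Set.eq_empty_of_forall_notMem ?_⟩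
    rintro x ⟨hx, hxA⟩
    exact hwin x ((mem_branches_strategyTree_iff τ).1 hx) hxA
  · rintro ⟨L, hL, hdisj⟩
    refine ⟨laverStrategy L, laverStrategy_infinite hL, fun x hx hxA => ?_⟩
    exact hdisj.subset ⟨mem_branches_of_follows_laverStrategy hL.2.1 hx, hxA⟩
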